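/- arXiv:2505.22115 — 3 statements merged into one kernel-verified Lean document; each statement's English description precedes it below -/
import Mathlib

section
/- Let α ∈ ℝ and let D₁ = diag(k₁₁,k₁₂) and D₂ = diag(k₂₁,k₂₂) be 2×2 diagonal matrices with strictly positive diagonal entries. Then there exist unique real numbers a₁, b₁, a₂, b₂ satisfying the continuity condition (1 + a₁, b₁)ᵀ = R_α (a₂, b₂)ᵀ and the force-balance condition D₁ (−1 + a₁, b₁)ᵀ = −R_α D₂ (a₂, b₂)ᵀ. (These are the reflection and transmission coefficients at the interior vertex of a two-edge tree, determined by the vertex conditions (c1), (c2).) -/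
open Matrix Real

/-- The 2×2 rotation matrix by angle `α`. -/
noncomputable def Rot (α : ℝ) : Matrix (Fin 2) (Fin 2) ℝ :=
  !![Real.cos α, -Real.sin α; Real.sin α, Real.cos α]

theorem diag_fin_two' (k l : ℝ) : Matrix.diagonal ![k, l] = !![k, 0; 0, l] := by
  rw [Matrix.eta_fin_two (Matrix.diagonal ![k, l])]
  simp [Matrix.diagonal_apply]

theorem key_iff (α : ℝ) (a₁ b₁ a₂ b₂ k₁₁ k₁₂ k₂₁ k₂₂ : ℝ) :
    ((![1 + a₁, b₁] = Rot α *ᵥ ![a₂, b₂]) ∧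
      (Matrix.diagonal ![k₁₁, k₁₂] *ᵥ ![-1 + a₁, b₁]
        = -((Rot α * Matrix.diagonal ![k₂₁, k₂₂]) *ᵥ ![a₂, b₂]))) ↔
    ((1 + a₁ = Real.cos α * a₂ - Real.sin α * b₂ ∧
      b₁ = Real.sin α * a₂ + Real.cos α * b₂) ∧
     (k₁₁ * (-1 + a₁) = -(Real.cos α * k₂₁ * a₂) + Real.sin α * k₂₂ * b₂ ∧
      k₁₂ * b₁ = -(Real.sin α * k₂₁ * a₂) - Real.cos α * k₂₂ * b₂)) := by
  rw [diag_fin_two', diag_fin_two', Rot]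
  constructor
  · rintro ⟨h1, h2⟩
    have e0 := congrFun h1 0
    have e1 := congrFun h1 1
    have f0 := congrFun h2 0
    have f1 := congrFun h2 1
    simp [Matrix.mulVec, dotProduct, Fin.sum_univ_two, Matrix.mul_apply] at e0 e1 f0 f1
    refine ⟨⟨by linarith, by linarith⟩, by linarith, by linarith⟩
  · rintro ⟨⟨e0, e1⟩, f0, f1⟩
    constructor <;> funext i <;> fin_cases i <;>
      simp [Matrix.mulVec, dotProduct, Fin.sum_univ_two, Matrix.mul_apply] <;> linarith

/-- For a two-edge tree with angle `α` and positive diagonal stiffness matrices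
`D₁ = diag(k₁₁,k₁₂)`, `D₂ = diag(k₂₁,k₂₂)`, there exist unique reflection and
transmission coefficients `a₁, b₁, a₂, b₂` satisfying the continuity condition
`(1 + a₁, b₁)ᵀ = R_α (a₂, b₂)ᵀ` and the force-balance condition
`D₁ (−1 + a₁, b₁)ᵀ = −R_α D₂ (a₂, b₂)ᵀ`. -/
theorem existsUnique_reflection_transmission_two_edges (α : ℝ)
    (k₁₁ k₁₂ k₂₁ k₂₂ : ℝ)
    (h₁₁ : 0 < k₁₁) (h₁₂ : 0 < k₁₂) (h₂₁ : 0 < k₂₁) (h₂₂ : 0 < k₂₂) :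
    ∃! p : ℝ × ℝ × ℝ × ℝ,
      (![1 + p.1, p.2.1] = Rot α *ᵥ ![p.2.2.1, p.2.2.2]) ∧
      (Matrix.diagonal ![k₁₁, k₁₂] *ᵥ ![-1 + p.1, p.2.1]
        = -((Rot α * Matrix.diagonal ![k₂₁, k₂₂]) *ᵥ ![p.2.2.1, p.2.2.2])) := by
  set c := Real.cos α with hc
  set s := Real.sin α with hs
  have hcs : s ^ 2 + c ^ 2 = 1 := sin_sq_add_cos_sq α
  have hΔpos : 0 < c ^ 2 * ((k₁₁ + k₂₁) * (k₁₂ + k₂₂)) + s ^ 2 * ((k₁₁ + k₂₂) * (k₁₂ + k₂₁)) := by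
    have hP : (0:ℝ) < (k₁₁ + k₂₁) * (k₁₂ + k₂₂) :=
      mul_pos (by linarith) (by linarith)
    have hQ : (0:ℝ) < (k₁₁ + k₂₂) * (k₁₂ + k₂₁) :=
      mul_pos (by linarith) (by linarith)
    rcases le_total ((k₁₁ + k₂₁) * (k₁₂ + k₂₂)) ((k₁₁ + k₂₂) * (k₁₂ + k₂₁)) with h | h
    · nlinarith [mul_nonneg (sq_nonneg s) (sub_nonneg.mpr h)]
    · nlinarith [mul_nonneg (sq_nonneg c) (sub_nonneg.mpr h)]
  have hΔne : c ^ 2 * ((k₁₁ + k₂₁) * (k₁₂ + k₂₂)) + s ^ 2 * ((k₁₁ + k₂₂) * (k₁₂ + k₂₁)) ≠ 0 :=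
    ne_of_gt hΔpos
  set Δ := c ^ 2 * ((k₁₁ + k₂₁) * (k₁₂ + k₂₂)) + s ^ 2 * ((k₁₁ + k₂₂) * (k₁₂ + k₂₁)) with hΔ
  set A₂ : ℝ := 2 * k₁₁ * c * (k₁₂ + k₂₂) / Δ with hA₂
  set B₂ : ℝ := -(2 * k₁₁ * s * (k₁₂ + k₂₁)) / Δ with hB₂
  refine ⟨(c * A₂ - s * B₂ - 1, s * A₂ + c * B₂, A₂, B₂), ?_, ?_⟩
  · refine (key_iff α (c * A₂ - s * B₂ - 1) (s * A₂ + c * B₂) A₂ B₂ k₁₁ k₁₂ k₂₁ k₂₂).mpr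
      ⟨⟨by ring, by ring⟩, ?_, ?_⟩
    · rw [hA₂, hB₂]
      field_simp
      rw [hΔ, ← hc, ← hs]
      ring
    · rw [hA₂, hB₂]
      field_simp
      rw [← hc, ← hs]
      ring
  · rintro ⟨a₁, b₁, a₂, b₂⟩ hp
    rw [key_iff] at hp
    obtain ⟨⟨e0, e1⟩, f0, f1⟩ := hp
    simp only at e0 e1 f0 f1
    have hA : c * (k₁₁ + k₂₁) * a₂ - s * (k₁₁ + k₂₂) * b₂ = 2 * k₁₁ := by
      linear_combination f0 - k₁₁ * e0
    have hB : s * (k₁₂ + k₂₁) * a₂ + c * (k₁₂ + k₂₂) * b₂ = 0 := by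
      linear_combination f1 - k₁₂ * e1
    have ha2 : a₂ = A₂ := by
      rw [hA₂]
      field_simp
      rw [hΔ]
      linear_combination (c * (k₁₂ + k₂₂)) * hA + (s * (k₁₁ + k₂₂)) * hB
    have hb2 : b₂ = B₂ := by
      rw [hB₂]
      field_simp
      rw [hΔ]
      linear_combination (-(s * (k₁₂ + k₂₁))) * hA + (c * (k₁₁ + k₂₁)) * hB
    have ha1 : a₁ = c * A₂ - s * B₂ - 1 := by rw [← ha2, ← hb2]; linarith
    have hb1 : b₁ = s * A₂ + c * B₂ := by rw [← ha2, ← hb2]; linarith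
    simp [ha1, hb1, ha2, hb2]
end

section
/- Let n ≥ 2, let θ₁, …, θₙ ∈ ℝ with α_{ij} = θ_j − θ_i, let D₁, …, Dₙ be 2×2 diagonal matrices with strictly positive diagonal entries, and fix an index i. Suppose the real numbers (a_j, b_j)_{j=1}^n satisfy the continuity conditions (1 + a_i, b_i)ᵀ = R_{α_{ij}} (a_j, b_j)ᵀ for all j ≠ i, and the force-balance condition D_i (−1 + a_i, b_i)ᵀ = −Σ_{j≠i} R_{α_{ij}} D_j (a_j, b_j)ᵀ. Then (Σ_{j≠i} R_{α_{ij}} D_j R_{−α_{ij}} + D_i) (1 + a_i, b_i)ᵀ = 2 D_i (1, 0)ᵀ. (This is the paper's derivation of equation (d1) from the vertex compatibility conditions at the interior vertex of a star graph.) -/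
open Matrix Real

lemma Rot_mul_Rot (α β : ℝ) : Rot α * Rot β = Rot (α + β) := by
  ext k l
  fin_cases k <;> fin_cases l <;>
    simp [Rot, Matrix.mul_apply, Fin.sum_univ_two, Real.cos_add, Real.sin_add] <;> ring

lemma Rot_neg_mul (α : ℝ) : Rot (-α) * Rot α = 1 := by
  rw [Rot_mul_Rot, neg_add_cancel]
  ext k l
  fin_cases k <;> fin_cases l <;> simp [Rot, Matrix.one_apply]

/-- For a star graph with `n ≥ 2` edges of direction angles `θ_j`
(`α_{ij} = θ_j − θ_i`) and positive diagonal stiffness matrices `D_j`, if the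
coefficients `(a_j, b_j)` satisfy the continuity conditions
`(1 + a_i, b_i)ᵀ = R_{α_{ij}} (a_j, b_j)ᵀ` for all `j ≠ i` and the force-balance
condition `D_i (−1 + a_i, b_i)ᵀ = −Σ_{j≠i} R_{α_{ij}} D_j (a_j, b_j)ᵀ`, then
`(Σ_{j≠i} R_{α_{ij}} D_j R_{−α_{ij}} + D_i) (1 + a_i, b_i)ᵀ = 2 D_i (1, 0)ᵀ`. -/
theorem star_graph_vertex_conditions_imply_d1 (n : ℕ) (hn : 2 ≤ n)
    (θ : Fin n → ℝ) (d : Fin n → Fin 2 → ℝ) (hd : ∀ j i, 0 < d j i)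
    (i : Fin n) (a b : Fin n → ℝ)
    (hcont : ∀ j, j ≠ i →
      ![1 + a i, b i] = Rot (θ j - θ i) *ᵥ ![a j, b j])
    (hforce : Matrix.diagonal (d i) *ᵥ ![-1 + a i, b i]
      = -∑ j ∈ Finset.univ.erase i,
          (Rot (θ j - θ i) * Matrix.diagonal (d j)) *ᵥ ![a j, b j]) :
    ((∑ j ∈ Finset.univ.erase i,
        Rot (θ j - θ i) * Matrix.diagonal (d j) * Rot (-(θ j - θ i)))
      + Matrix.diagonal (d i)) *ᵥ ![1 + a i, b i]
    = (2 : ℝ) • (Matrix.diagonal (d i) *ᵥ ![1, 0]) := by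
  have key : ∀ j ∈ Finset.univ.erase i,
      (Rot (θ j - θ i) * Matrix.diagonal (d j) * Rot (-(θ j - θ i))) *ᵥ ![1 + a i, b i]
        = (Rot (θ j - θ i) * Matrix.diagonal (d j)) *ᵥ ![a j, b j] := by
    intro j hj
    have hji : j ≠ i := (Finset.mem_erase.mp hj).1
    have h1 : Rot (-(θ j - θ i)) *ᵥ ![1 + a i, b i] = ![a j, b j] := by
      rw [hcont j hji, Matrix.mulVec_mulVec, Rot_neg_mul, Matrix.one_mulVec]
    rw [← Matrix.mulVec_mulVec, h1]
  have hsum : (∑ j ∈ Finset.univ.erase i,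
      Rot (θ j - θ i) * Matrix.diagonal (d j) * Rot (-(θ j - θ i))) *ᵥ ![1 + a i, b i]
      = ∑ j ∈ Finset.univ.erase i,
        (Rot (θ j - θ i) * Matrix.diagonal (d j) * Rot (-(θ j - θ i))) *ᵥ ![1 + a i, b i] := by
    funext k
    simp only [Matrix.mulVec, dotProduct, Matrix.sum_apply, Finset.sum_apply,
      Finset.sum_mul]
    exact Finset.sum_comm
  rw [Matrix.add_mulVec, hsum, Finset.sum_congr rfl key,
    show (∑ j ∈ Finset.univ.erase i, (Rot (θ j - θ i) * Matrix.diagonal (d j)) *ᵥ ![a j, b j])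
      = -(Matrix.diagonal (d i) *ᵥ ![-1 + a i, b i]) from by rw [hforce, neg_neg]]
  funext k
  fin_cases k <;>
    simp [Matrix.mulVec, Matrix.diagonal, dotProduct, Fin.sum_univ_two] <;> ring
end

section
/- Let n ≥ 2, let θ₁, …, θₙ ∈ ℝ with α_{ij} = θ_j − θ_i, let D₁, …, Dₙ be 2×2 diagonal matrices with strictly positive diagonal entries, and fix an index i. Then there exist unique real numbers (a_j, b_j)_{j=1}^n such that (1 + a_i, b_i)ᵀ = R_{α_{ij}} (a_j, b_j)ᵀ for all j ≠ i and D_i (−1 + a_i, b_i)ᵀ = −Σ_{j≠i} R_{α_{ij}} D_j (a_j, b_j)ᵀ. (Existence and uniqueness of the reflection and transmission coefficients associated with the i-th boundary vertex of a star graph.) -/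
open Matrix Real

lemma Rot_mul (a b : ℝ) : Rot a * Rot b = Rot (a + b) := by
  ext k l
  fin_cases k <;> fin_cases l <;>
    simp [Rot, Matrix.mul_apply, Fin.sum_univ_two, Real.cos_add, Real.sin_add] <;> ring

lemma Rot_zero : Rot 0 = 1 := by
  ext k l
  fin_cases k <;> fin_cases l <;> simp [Rot]

lemma Rot_conjTranspose (a : ℝ) : (Rot a)ᴴ = Rot (-a) := by
  ext k l
  fin_cases k <;> fin_cases l <;> simp [Rot]

lemma sum_mulVec_aux {ι : Type*} (s : Finset ι) (f : ι → Matrix (Fin 2) (Fin 2) ℝ)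
    (v : Fin 2 → ℝ) : (∑ j ∈ s, f j) *ᵥ v = ∑ j ∈ s, f j *ᵥ v := by
  classical
  induction s using Finset.induction with
  | empty => simp [Matrix.zero_mulVec]
  | insert _ _ h ih => simp [Finset.sum_insert h, Matrix.add_mulVec, ih]

lemma vec2_eta (v : Fin 2 → ℝ) : ![v 0, v 1] = v := by
  funext k; fin_cases k <;> rfl

/-- For a star graph with `n ≥ 2` edges of direction angles `θ_j`
(`α_{ij} = θ_j − θ_i`) and positive diagonal stiffness matrices `D_j`, and a fixed
index `i`, there exist unique reflection and transmission coefficients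
`(a_j, b_j)_{j=1}^n` such that `(1 + a_i, b_i)ᵀ = R_{α_{ij}} (a_j, b_j)ᵀ` for all
`j ≠ i` and `D_i (−1 + a_i, b_i)ᵀ = −Σ_{j≠i} R_{α_{ij}} D_j (a_j, b_j)ᵀ`. -/
theorem existsUnique_reflection_transmission_star_graph (n : ℕ) (hn : 2 ≤ n)
    (θ : Fin n → ℝ) (d : Fin n → Fin 2 → ℝ) (hd : ∀ j i, 0 < d j i)
    (i : Fin n) :
    ∃! p : (Fin n → ℝ) × (Fin n → ℝ),
      (∀ j, j ≠ i →
        ![1 + p.1 i, p.2 i] = Rot (θ j - θ i) *ᵥ ![p.1 j, p.2 j]) ∧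
      (Matrix.diagonal (d i) *ᵥ ![-1 + p.1 i, p.2 i]
        = -∑ j ∈ Finset.univ.erase i,
            (Rot (θ j - θ i) * Matrix.diagonal (d j)) *ᵥ ![p.1 j, p.2 j]) := by
  classical
  set e1 : Fin 2 → ℝ := ![1, 0] with he1
  set M : Matrix (Fin 2) (Fin 2) ℝ :=
    ∑ j ∈ Finset.univ.erase i, Rot (θ j - θ i) * Matrix.diagonal (d j) * Rot (θ i - θ j)
    with hM
  have hMps : M.PosSemidef := by
    rw [hM]
    refine Finset.sum_induction _ _ (fun A B hA hB => hA.add hB) Matrix.PosSemidef.zero ?_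
    intro j _
    have h1 : Rot (θ i - θ j) = (Rot (θ j - θ i))ᴴ := by
      rw [Rot_conjTranspose]; ring_nf
    rw [h1]
    exact (Matrix.posSemidef_diagonal_iff.mpr fun k => (hd j k).le).mul_mul_conjTranspose_same _
  have hDpd : (Matrix.diagonal (d i)).PosDef :=
    Matrix.posDef_diagonal_iff.mpr fun k => hd i k
  set A := Matrix.diagonal (d i) + M with hAdef
  have hApd : A.PosDef := hDpd.add_posSemidef hMps
  have hAdet : IsUnit A.det := hApd.det_pos.ne'.isUnit
  set u : Fin 2 → ℝ := A⁻¹ *ᵥ ((Matrix.diagonal (d i) - M) *ᵥ e1) with hu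
  have hAu : A *ᵥ u = (Matrix.diagonal (d i) - M) *ᵥ e1 := by
    rw [hu, Matrix.mulVec_mulVec, Matrix.mul_nonsing_inv _ hAdet, Matrix.one_mulVec]
  -- inverse of Rot
  have hRinv : ∀ (a : ℝ) (x : Fin 2 → ℝ), Rot a *ᵥ (Rot (-a) *ᵥ x) = x := by
    intro a x
    rw [Matrix.mulVec_mulVec, Rot_mul, add_neg_cancel, Rot_zero, Matrix.one_mulVec]
  set w : Fin n → Fin 2 → ℝ :=
    fun j => if j = i then u else Rot (θ i - θ j) *ᵥ (u + e1) with hw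
  refine ⟨(fun j => w j 0, fun j => w j 1), ⟨?_, ?_⟩, ?_⟩
  · -- first condition
    intro j hj
    have hwj : w j = Rot (θ i - θ j) *ᵥ (u + e1) := by rw [hw]; simp [hj]
    show ![1 + w i 0, w i 1] = Rot (θ j - θ i) *ᵥ ![w j 0, w j 1]
    rw [vec2_eta, hwj]
    have hwi : w i = u := by rw [hw]; simp
    have h2 : θ i - θ j = -(θ j - θ i) := by ring
    rw [h2, hRinv]
    funext k; fin_cases k <;> simp [hwi, he1] <;> ring
  · -- second condition
    show Matrix.diagonal (d i) *ᵥ ![-1 + w i 0, w i 1]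
        = -∑ j ∈ Finset.univ.erase i,
            (Rot (θ j - θ i) * Matrix.diagonal (d j)) *ᵥ ![w j 0, w j 1]
    have hwi : w i = u := by rw [hw]; simp
    have hsum : ∑ j ∈ Finset.univ.erase i,
        (Rot (θ j - θ i) * Matrix.diagonal (d j)) *ᵥ ![w j 0, w j 1]
        = M *ᵥ (u + e1) := by
      rw [hM, sum_mulVec_aux]
      refine Finset.sum_congr rfl fun j hj => ?_
      have hj' : j ≠ i := Finset.ne_of_mem_erase hj
      rw [vec2_eta]
      have hwj : w j = Rot (θ i - θ j) *ᵥ (u + e1) := by rw [hw]; simp [hj']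
      rw [hwj, Matrix.mulVec_mulVec]
    rw [hsum]
    have hvec : ![-1 + w i 0, w i 1] = u - e1 := by
      funext k; fin_cases k <;> simp [hwi, he1] <;> ring
    rw [hvec]
    have h := hAu
    rw [hAdef, Matrix.add_mulVec, Matrix.sub_mulVec] at h
    rw [Matrix.mulVec_sub, Matrix.mulVec_add]
    funext k
    have hk := congrFun h k
    simp only [Pi.add_apply, Pi.sub_apply, Pi.neg_apply] at hk ⊢
    linarith
  · -- uniqueness
    rintro q ⟨h1, h2⟩
    set v : Fin 2 → ℝ := ![q.1 i, q.2 i] with hv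
    have hv1 : ![1 + q.1 i, q.2 i] = v + e1 := by
      funext k; fin_cases k <;> simp [hv, he1] <;> ring
    have hqj : ∀ j, j ≠ i → ![q.1 j, q.2 j] = Rot (θ i - θ j) *ᵥ (v + e1) := by
      intro j hj
      have h3 := h1 j hj
      rw [hv1] at h3
      have h4 : θ j - θ i = -(θ i - θ j) := by ring
      calc ![q.1 j, q.2 j]
          = Rot (θ i - θ j) *ᵥ (Rot (-(θ i - θ j)) *ᵥ ![q.1 j, q.2 j]) := by
            rw [hRinv]
        _ = Rot (θ i - θ j) *ᵥ (v + e1) := by rw [← h4, ← h3]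
    have hAv : A *ᵥ v = (Matrix.diagonal (d i) - M) *ᵥ e1 := by
      have hsum : ∑ j ∈ Finset.univ.erase i,
          (Rot (θ j - θ i) * Matrix.diagonal (d j)) *ᵥ ![q.1 j, q.2 j]
          = M *ᵥ (v + e1) := by
        rw [hM, sum_mulVec_aux]
        refine Finset.sum_congr rfl fun j hj => ?_
        have hj' : j ≠ i := Finset.ne_of_mem_erase hj
        rw [hqj j hj', Matrix.mulVec_mulVec]
      have h5 := h2
      rw [hsum] at h5
      have hvec : ![-1 + q.1 i, q.2 i] = v - e1 := by
        funext k; fin_cases k <;> simp [hv, he1] <;> ring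
      rw [hvec] at h5
      rw [hAdef, Matrix.add_mulVec, Matrix.sub_mulVec]
      rw [Matrix.mulVec_sub] at h5
      rw [Matrix.mulVec_add] at h5
      funext k
      have hk := congrFun h5 k
      simp only [Pi.add_apply, Pi.sub_apply, Pi.neg_apply] at hk ⊢
      linarith
    have hvu : v = u := by
      have : A⁻¹ *ᵥ (A *ᵥ v) = v := by
        rw [Matrix.mulVec_mulVec, Matrix.nonsing_inv_mul _ hAdet, Matrix.one_mulVec]
      rw [← this, hAv, hu]
    have hqw : ∀ j, ![q.1 j, q.2 j] = w j := by
      intro j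
      by_cases hj : j = i
      · subst hj; rw [hw]; simpa [← hv] using hvu
      · rw [hqj j hj, hvu, hw]; simp [hj]
    refine Prod.ext ?_ ?_ <;> funext j
    · have := congrFun (hqw j) 0; simpa using this
    · have := congrFun (hqw j) 1; simpa using this
end
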